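/- In the Successive Rejects allocation, for any round r ∈ [K−1], the total number of samples used up to and including round r, N_r = (K−r)·n_r + Σ_{s=1}^r n_s with n_s = ⌈(1/loḡ(K))·(T−K)/(K+1−s)⌉, satisfies N_r ≤ T. -/

import Mathlib

noncomputable section

/-- `loḡ(K) := 1/2 + Σ_{i=2}^K 1/i`. -/
def logBar (K : ℕ) : ℝ := 1 / 2 + ∑ i ∈ Finset.Icc 2 K, (1 : ℝ) / i

/-- Successive Rejects allocation: `n_s := ⌈(1/loḡ K) · (T - K)/(K + 1 - s)⌉`. -/
def nSR (T K s : ℕ) : ℝ := ⌈(1 / logBar K) * ((T : ℝ) - K) / ((K + 1 - s : ℕ) : ℝ)⌉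

/-!
`N_r` is a sum of `K` ceilings counted with multiplicity, each exceeding its argument by
less than one, so rounding costs at most `K`. Writing `x = (T - K)/loḡ K`, the unrounded total is
`x · ((K - r)/(K + 1 - r) + Σ_{i=K+1-r}^{K} 1/i)`, and the bracket is at most `loḡ K` because
`a/(a + 1) ≤ loḡ a` for `a = K - r`. Hence `N_r ≤ x · loḡ K + K = T`.
-/

open Finset

lemma logBar_pos (K : ℕ) : 0 < logBar K := by
  unfold logBar
  have : (0 : ℝ) ≤ ∑ i ∈ Icc 2 K, (1 : ℝ) / i := sum_nonneg fun i _ => by positivity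
  linarith

lemma div_add_one_le_logBar (a : ℕ) : (a : ℝ) / (a + 1) ≤ logBar a := by
  unfold logBar
  rcases Nat.lt_or_ge a 2 with ha | ha
  · interval_cases a <;> norm_num
  · have hfrac : (a : ℝ) / (a + 1) ≤ 1 := by rw [div_le_one (by positivity)]; linarith
    have htwo : (1 : ℝ) / 2 ≤ ∑ i ∈ Icc 2 a, (1 : ℝ) / i := by
      simpa using single_le_sum (f := fun i : ℕ => (1 : ℝ) / i) (fun i _ => by positivity)
        (mem_Icc.mpr ⟨le_rfl, ha⟩)
    linarith

lemma logBar_add_sum_Ioc {a K : ℕ} (ha : 1 ≤ a) (haK : a ≤ K) :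
    logBar a + ∑ i ∈ Ioc a K, (1 : ℝ) / i = logBar K := by
  have hIcc : ∀ n, Icc 2 n = Ioc 1 n := fun n => Icc_add_one_left_eq_Ioc 1 n
  simp only [logBar, hIcc, add_assoc, sum_Ioc_consecutive _ ha haK]

lemma sum_Icc_one_comp_sub_eq_sum_Ioc {M : Type*} [AddCommMonoid M] (f : ℕ → M) {r K : ℕ}
    (hr : r ≤ K) : ∑ s ∈ Icc 1 r, f (K + 1 - s) = ∑ i ∈ Ioc (K - r) K, f i := by
  refine sum_nbij' (fun s => K + 1 - s) (fun i => K + 1 - i) ?_ ?_ ?_ ?_ fun _ _ => rfl <;>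
    intro s hs <;> simp only [mem_Icc, mem_Ioc] at hs ⊢ <;> omega

lemma div_add_sum_inv_le_logBar {r K : ℕ} (hr : r < K) :
    ((K - r : ℕ) : ℝ) / ((K + 1 - r : ℕ) : ℝ)
      + ∑ s ∈ Icc 1 r, (1 : ℝ) / ((K + 1 - s : ℕ) : ℝ) ≤ logBar K := by
  have hsucc : K + 1 - r = (K - r) + 1 := by omega
  rw [sum_Icc_one_comp_sub_eq_sum_Ioc (fun i => (1 : ℝ) / i) hr.le, hsucc, Nat.cast_succ,
    ← logBar_add_sum_Ioc (a := K - r) (by omega) (Nat.sub_le K r)]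
  gcongr
  exact div_add_one_le_logBar _

lemma mul_ceil_div_add_sum_ceil_div_le {r K : ℕ} (hr : r < K) {x : ℝ} (hx : 0 ≤ x) :
    ((K - r : ℕ) : ℝ) * ⌈x / ((K + 1 - r : ℕ) : ℝ)⌉
      + ∑ s ∈ Icc 1 r, (⌈x / ((K + 1 - s : ℕ) : ℝ)⌉ : ℝ) ≤ x * logBar K + K := by
  have hceil : ∀ s : ℕ, (⌈x / ((K + 1 - s : ℕ) : ℝ)⌉ : ℝ) ≤ x * (1 / ((K + 1 - s : ℕ) : ℝ)) + 1 :=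
    fun s => by rw [mul_one_div]; exact (Int.ceil_lt_add_one _).le
  have hcount : ((K - r : ℕ) : ℝ) + r = K := by rw [Nat.cast_sub hr.le]; ring
  calc ((K - r : ℕ) : ℝ) * ⌈x / ((K + 1 - r : ℕ) : ℝ)⌉
        + ∑ s ∈ Icc 1 r, (⌈x / ((K + 1 - s : ℕ) : ℝ)⌉ : ℝ)
      ≤ ((K - r : ℕ) : ℝ) * (x * (1 / ((K + 1 - r : ℕ) : ℝ)) + 1)
        + ∑ s ∈ Icc 1 r, (x * (1 / ((K + 1 - s : ℕ) : ℝ)) + 1) := by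
        gcongr with s
        · exact hceil r
        · exact hceil s
    _ = x * (((K - r : ℕ) : ℝ) / ((K + 1 - r : ℕ) : ℝ)
          + ∑ s ∈ Icc 1 r, (1 : ℝ) / ((K + 1 - s : ℕ) : ℝ)) + (((K - r : ℕ) : ℝ) + r) := by
        rw [sum_add_distrib, ← mul_sum]
        simp only [sum_const, Nat.card_Icc, add_tsub_cancel_right, nsmul_eq_mul, mul_one]
        ring
    _ ≤ x * logBar K + K := by
        rw [hcount]
        gcongr
        exact div_add_sum_inv_le_logBar hr

theorem SR_total_samples_le_general (T K : ℕ) (hT : K ≤ T) :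
    ∀ r ∈ Finset.Icc 1 (K - 1),
      ((K - r : ℕ) : ℝ) * nSR T K r + ∑ s ∈ Finset.Icc 1 r, nSR T K s ≤ (T : ℝ) := by
  intro r hr
  have hrK : r < K := by have := mem_Icc.mp hr; omega
  have hx : 0 ≤ 1 / logBar K * ((T : ℝ) - K) :=
    mul_nonneg (one_div_nonneg.mpr (logBar_pos K).le) (sub_nonneg.mpr (by exact_mod_cast hT))
  calc ((K - r : ℕ) : ℝ) * nSR T K r + ∑ s ∈ Icc 1 r, nSR T K s
      ≤ 1 / logBar K * ((T : ℝ) - K) * logBar K + K :=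
        mul_ceil_div_add_sum_ceil_div_le hrK hx
    _ = T := by field_simp [(logBar_pos K).ne']; ring

/-- For every round `r ∈ [K-1]`, the total number of samples used by Successive Rejects
up to round `r`, `N_r = (K - r)·n_r + Σ_{s=1}^r n_s`, is at most `T`. -/
theorem SR_total_samples_le (T K : ℕ) (hK : 2 ≤ K) (hT : K ≤ T) :
    ∀ r ∈ Finset.Icc 1 (K - 1),
      ((K - r : ℕ) : ℝ) * nSR T K r + ∑ s ∈ Finset.Icc 1 r, nSR T K s ≤ (T : ℝ) :=
  SR_total_samples_le_general T K hT
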